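/- arXiv:math/0603573 — 12 statements merged into one kernel-verified Lean document; each statement's English description precedes it below -/
import Mathlib

section
/- Let L be a type, ι a nonempty index type, and for each i : ι let R_i be a general logic-system on L with generated operator C_i = C_{R_i}. Then for every X : Set L, the operator generated by the union of the rules satisfies C_{⋃ i, R_i} (X) = ⋂ {Y : Set L | X ⊆ Y and ∀ i, C_i Y = Y}. In other words, the union of the logic-systems generates the lattice-theoretic supremum ⋁_w of the family {C_i}, defined on X as the intersection of all sets containing X that are closed under every C_i. -/
/-- The operator generated by a general logic-system `R` on `L`. -/
def genOp {L : Type*} (R : Set (List L × L)) (X : Set L) : Set L :=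
  ⋂₀ {S : Set L | X ⊆ S ∧ ∀ r ∈ R, (∀ a ∈ r.1, a ∈ S) → r.2 ∈ S}

lemma subset_genOp {L : Type*} (R : Set (List L × L)) (X : Set L) : X ⊆ genOp R X := by
  intro x hx S hS
  exact hS.1 hx

lemma genOp_closed {L : Type*} (R : Set (List L × L)) (X : Set L) :
    ∀ r ∈ R, (∀ a ∈ r.1, a ∈ genOp R X) → r.2 ∈ genOp R X := by
  intro r hr hprem S hS
  exact hS.2 r hr fun a ha => hprem a ha S hS

lemma genOp_le {L : Type*} (R : Set (List L × L)) {X Y : Set L} (hXY : X ⊆ Y)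
    (hY : ∀ r ∈ R, (∀ a ∈ r.1, a ∈ Y) → r.2 ∈ Y) : genOp R X ⊆ Y :=
  fun _ hx => hx Y ⟨hXY, hY⟩

lemma genOp_eq_iff {L : Type*} (R : Set (List L × L)) (Y : Set L) :
    genOp R Y = Y ↔ ∀ r ∈ R, (∀ a ∈ r.1, a ∈ Y) → r.2 ∈ Y := by
  constructor
  · intro h r hr hprem
    rw [← h] at hprem ⊢
    exact genOp_closed R Y r hr hprem
  · intro h
    exact le_antisymm (genOp_le R subset_rfl h) (subset_genOp R Y)

theorem stmt_1 {L : Type*} {ι : Type*} [Nonempty ι] (R : ι → Set (List L × L)) :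
    ∀ X : Set L,
      genOp (⋃ i, R i) X =
        ⋂₀ {Y : Set L | X ⊆ Y ∧ ∀ i, genOp (R i) Y = Y} := by
  intro X
  have hsetseq : {Y : Set L | X ⊆ Y ∧ ∀ i, genOp (R i) Y = Y} =
      {S : Set L | X ⊆ S ∧ ∀ r ∈ ⋃ i, R i, (∀ a ∈ r.1, a ∈ S) → r.2 ∈ S} := by
    ext Y
    simp only [Set.mem_setOf_eq, Set.mem_iUnion, genOp_eq_iff]
    constructor
    · rintro ⟨h1, h2⟩
      exact ⟨h1, fun r ⟨i, hi⟩ => h2 i r hi⟩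
    · rintro ⟨h1, h2⟩
      exact ⟨h1, fun i r hi => h2 r ⟨i, hi⟩⟩
  rw [genOp, ← hsetseq]
end

section
/- Let L be a type and H a nonempty set of finite consequence operators on L. Then the operator V defined by V(X) = ⋂ {Y : Set L | X ⊆ Y and ∀ C ∈ H, C Y = Y} is itself a finite consequence operator on L. (Hence the lattice of finite consequence operators is join-complete.) -/
def IsConseq {L : Type*} (C : Set L → Set L) : Prop :=
  (∀ X, X ⊆ C X) ∧ (∀ X Y : Set L, X ⊆ Y → C X ⊆ C Y) ∧ (∀ X, C (C X) = C X)

def IsFinConseq {L : Type*} (C : Set L → Set L) : Prop :=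
  IsConseq C ∧ ∀ X, C X = ⋃ F ∈ {F : Set L | F ⊆ X ∧ F.Finite}, C F

theorem stmt_2 {L : Type*} (H : Set (Set L → Set L)) (hne : H.Nonempty)
    (hH : ∀ C ∈ H, IsFinConseq C) :
    IsFinConseq (fun X : Set L => ⋂₀ {Y : Set L | X ⊆ Y ∧ ∀ C ∈ H, C Y = Y}) := by
  set V : Set L → Set L := fun X : Set L => ⋂₀ {Y : Set L | X ⊆ Y ∧ ∀ C ∈ H, C Y = Y}
    with hVdef
  have hsub : ∀ X : Set L, X ⊆ V X := by
    intro X a ha Y hY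
    exact hY.1 ha
  have hmem : ∀ X : Set L, X ⊆ V X ∧ ∀ C ∈ H, C (V X) = V X := by
    intro X
    refine ⟨hsub X, fun C hC => ?_⟩
    apply Set.Subset.antisymm
    · intro a ha Y hY
      have h1 : C (V X) ⊆ C Y := (hH C hC).1.2.1 _ _ (Set.sInter_subset_of_mem hY)
      rw [hY.2 C hC] at h1
      exact h1 ha
    · exact (hH C hC).1.1 _
  have hmin : ∀ X Y : Set L, X ⊆ Y → (∀ C ∈ H, C Y = Y) → V X ⊆ Y :=
    fun X Y h1 h2 => Set.sInter_subset_of_mem ⟨h1, h2⟩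
  have hmono : ∀ X Y : Set L, X ⊆ Y → V X ⊆ V Y := by
    intro X Y hXY
    exact hmin X (V Y) (hXY.trans (hsub Y)) (hmem Y).2
  have hidem : ∀ X, V (V X) = V X := by
    intro X
    exact Set.Subset.antisymm (hmin _ _ le_rfl (hmem X).2) (hsub _)
  refine ⟨⟨hsub, hmono, hidem⟩, ?_⟩
  intro X
  set W : Set L := ⋃ F ∈ {F : Set L | F ⊆ X ∧ F.Finite}, V F with hWdef
  have hmemW : ∀ a : L, a ∈ W ↔ ∃ F : Set L, F ⊆ X ∧ F.Finite ∧ a ∈ V F := by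
    intro a
    simp only [hWdef, Set.mem_iUnion, Set.mem_setOf_eq, exists_prop]
    tauto
  apply Set.Subset.antisymm
  · -- V X ⊆ W
    have hXW : X ⊆ W := by
      intro x hx
      exact (hmemW x).2 ⟨{x}, Set.singleton_subset_iff.2 hx, Set.finite_singleton x,
        hsub {x} rfl⟩
    have key : ∀ G : Set L, G.Finite → G ⊆ W → ∃ F, F ⊆ X ∧ F.Finite ∧ G ⊆ V F := by
      intro G hG
      refine Set.Finite.induction_on (motive := fun s _ => s ⊆ W → ∃ F, F ⊆ X ∧ F.Finite ∧ s ⊆ V F) G hG ?_ ?_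
      · intro _
        exact ⟨∅, Set.empty_subset X, Set.finite_empty, Set.empty_subset _⟩
      · intro a s ha hs ih hins
        obtain ⟨F, hFX, hFfin, hsF⟩ := ih (fun x hx => hins (Set.mem_insert_of_mem _ hx))
        obtain ⟨F', hF'X, hF'fin, haF'⟩ := (hmemW a).1 (hins (Set.mem_insert _ _))
        refine ⟨F ∪ F', Set.union_subset hFX hF'X, hFfin.union hF'fin, ?_⟩
        intro x hx
        rcases Set.mem_insert_iff.1 hx with rfl | hx
        · exact hmono F' (F ∪ F') Set.subset_union_right haF'
        · exact hmono F (F ∪ F') Set.subset_union_left (hsF hx)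
    have hWclosed : ∀ C ∈ H, C W = W := by
      intro C hC
      apply Set.Subset.antisymm
      · intro a ha
        rw [(hH C hC).2 W] at ha
        simp only [Set.mem_iUnion, Set.mem_setOf_eq, exists_prop] at ha
        obtain ⟨G, ⟨hGW, hGfin⟩, haG⟩ := ha
        obtain ⟨F, hFX, hFfin, hGF⟩ := key G hGfin hGW
        have h1 : C G ⊆ C (V F) := (hH C hC).1.2.1 _ _ hGF
        rw [(hmem F).2 C hC] at h1
        exact (hmemW a).2 ⟨F, hFX, hFfin, h1 haG⟩
      · exact (hH C hC).1.1 W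
    exact hmin X W hXW hWclosed
  · -- W ⊆ V X
    intro a ha
    obtain ⟨F, hFX, _, haF⟩ := (hmemW a).1 ha
    exact hmono F X hFX haF
end

section
/- If C₁ and C₂ are finite consequence operators on a type L, then the operator C₃ defined pointwise by C₃(X) = C₁(X) ∩ C₂(X) is a finite consequence operator on L. (The set of finite consequence operators is closed under finite meets.) -/
theorem stmt_4 {L : Type*} (C₁ C₂ : Set L → Set L)
    (h₁ : IsFinConseq C₁) (h₂ : IsFinConseq C₂) :
    IsFinConseq (fun X : Set L => C₁ X ∩ C₂ X) := by
  obtain ⟨⟨e₁, m₁, i₁⟩, f₁⟩ := h₁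
  obtain ⟨⟨e₂, m₂, i₂⟩, f₂⟩ := h₂
  have ext : ∀ X : Set L, X ⊆ C₁ X ∩ C₂ X := fun X =>
    Set.subset_inter (e₁ X) (e₂ X)
  have mono : ∀ X Y : Set L, X ⊆ Y → C₁ X ∩ C₂ X ⊆ C₁ Y ∩ C₂ Y := fun X Y h =>
    Set.inter_subset_inter (m₁ X Y h) (m₂ X Y h)
  refine ⟨⟨ext, mono, ?_⟩, ?_⟩
  · intro X
    apply Set.Subset.antisymm
    · exact Set.subset_inter
        (by
          calc C₁ (C₁ X ∩ C₂ X) ∩ C₂ (C₁ X ∩ C₂ X) ⊆ C₁ (C₁ X) :=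
                Set.inter_subset_left.trans (m₁ _ _ Set.inter_subset_left)
            _ = C₁ X := i₁ X)
        (by
          calc C₁ (C₁ X ∩ C₂ X) ∩ C₂ (C₁ X ∩ C₂ X) ⊆ C₂ (C₂ X) :=
                Set.inter_subset_right.trans (m₂ _ _ Set.inter_subset_right)
            _ = C₂ X := i₂ X)
    · exact ext _
  · intro X
    apply Set.Subset.antisymm
    · intro a ⟨ha1, ha2⟩
      rw [f₁ X] at ha1
      rw [f₂ X] at ha2
      simp only [Set.mem_iUnion, Set.mem_setOf_eq] at ha1 ha2 ⊢
      obtain ⟨F₁, ⟨hF₁X, hF₁f⟩, haF₁⟩ := ha1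
      obtain ⟨F₂, ⟨hF₂X, hF₂f⟩, haF₂⟩ := ha2
      exact ⟨F₁ ∪ F₂, ⟨Set.union_subset hF₁X hF₂X, hF₁f.union hF₂f⟩,
        m₁ _ _ Set.subset_union_left haF₁, m₂ _ _ Set.subset_union_right haF₂⟩
    · refine Set.iUnion₂_subset fun F ⟨hFX, _⟩ => mono _ _ hFX
end

section
/- Every finite consequence operator is generated by a general logic-system: if C is a finite consequence operator on a type L, then the logic-system R = {(l, x) | l : List L and x ∈ C({a | a is an entry of l})} (where the empty list contributes the rules with conclusions in C(∅)) satisfies C_R = C, i.e. C_R(X) = C(X) for every X : Set L. -/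
theorem stmt_7 {L : Type*} (C : Set L → Set L) (hC : IsFinConseq C) :
    ∀ X : Set L,
      genOp {r : List L × L | r.2 ∈ C {a : L | a ∈ r.1}} X = C X := by
  obtain ⟨⟨hext, hmono, hidem⟩, hfin⟩ := hC
  intro X
  apply subset_antisymm
  · -- genOp ⊆ C X : C X is closed
    intro x hx
    apply hx
    refine ⟨hext X, ?_⟩
    rintro ⟨l, c⟩ hr hprem
    have h1 : {a : L | a ∈ l} ⊆ C X := hprem
    have := hmono _ _ h1 hr
    rwa [hidem] at this
  · -- C X ⊆ genOp
    intro x hx S hS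
    obtain ⟨hXS, hrules⟩ := hS
    rw [hfin X] at hx
    simp only [Set.mem_iUnion] at hx
    obtain ⟨F, ⟨hFX, hFfin⟩, hxF⟩ := hx
    obtain ⟨l, hl⟩ : ∃ l : List L, {a : L | a ∈ l} = F := by
      refine ⟨hFfin.toFinset.toList, ?_⟩
      ext a; simp
    have hrule : ((l, x) : List L × L) ∈
        {r : List L × L | r.2 ∈ C {a : L | a ∈ r.1}} := by
      simpa [hl] using hxF
    exact hrules _ hrule (fun a ha => hXS (hFX (hl ▸ ha)))
end

section
/- The pointwise union of two finite consequence operators need not be a consequence operator: let L be a type with four distinct elements a, b, c, d, let B be the operator generated by the logic-system {([a], b), ([c], d)} and R the operator generated by the logic-system {([a], c)}. Then the map K(X) = B(X) ∪ R(X) satisfies K(K({a})) ≠ K({a}); in particular K is not a consequence operator. -/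
theorem stmt_8 {L : Type*} (a b c d : L)
    (hab : a ≠ b) (hac : a ≠ c) (had : a ≠ d)
    (hbc : b ≠ c) (hbd : b ≠ d) (hcd : c ≠ d) :
    (fun X : Set L => genOp {([a], b), ([c], d)} X ∪ genOp {([a], c)} X)
        ((fun X : Set L => genOp {([a], b), ([c], d)} X ∪ genOp {([a], c)} X) {a}) ≠
      (fun X : Set L => genOp {([a], b), ([c], d)} X ∪ genOp {([a], c)} X) {a} := by
  simp only
  intro h
  -- c ∈ K {a}, via the second system
  have hcK : c ∈ genOp {([a], b), ([c], d)} {a} ∪ genOp {([a], c)} {a} := by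
    right
    intro S hS
    obtain ⟨hXS, hrules⟩ := hS
    have ha : a ∈ S := hXS rfl
    have := hrules ([a], c) rfl
    exact this (by simpa using ha)
  -- d ∈ K (K {a}), via rule ([c], d)
  have hdKK : d ∈ genOp {([a], b), ([c], d)}
      (genOp {([a], b), ([c], d)} {a} ∪ genOp {([a], c)} {a}) ∪
      genOp {([a], c)} (genOp {([a], b), ([c], d)} {a} ∪ genOp {([a], c)} {a}) := by
    left
    intro S hS
    obtain ⟨hXS, hrules⟩ := hS
    have hc : c ∈ S := hXS hcK
    have := hrules ([c], d) (Or.inr rfl)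
    exact this (by simpa using hc)
  rw [h] at hdKK
  -- but d ∉ K {a}
  rcases hdKK with hd | hd
  · have hsub : genOp {([a], b), ([c], d)} {a} ⊆ ({a, b} : Set L) := by
      apply Set.sInter_subset_of_mem
      constructor
      · intro x hx; exact Or.inl hx
      · rintro r (rfl | rfl) hr
        · exact Or.inr rfl
        · have : c ∈ ({a, b} : Set L) := hr c (by simp)
          rcases this with h1 | h1
          · exact absurd h1.symm hac
          · exact absurd h1.symm hbc
    rcases hsub hd with h1 | h1
    · exact had h1.symm
    · exact hbd h1.symm
  · have hsub : genOp {([a], c)} {a} ⊆ ({a, c} : Set L) := by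
      apply Set.sInter_subset_of_mem
      constructor
      · intro x hx; exact Or.inl hx
      · rintro r rfl hr
        exact Or.inr rfl
    rcases hsub hd with h1 | h1
    · exact had h1.symm
    · exact hcd h1.symm
end

section
/- Let L be a type, ι a nonempty index type, and for each i : ι let R_i be a general logic-system on L with generated operator C_i = C_{R_i}. If the operator generated by the intersection ⋂ i, R_i equals C_j for some j : ι, then C_j is the pointwise infimum of the family: for every X : Set L, C_j(X) = ⋂ i, C_i(X). -/
lemma genOp_mono_rules {L : Type*} {R R' : Set (List L × L)} (h : R' ⊆ R) (X : Set L) :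
    genOp R' X ⊆ genOp R X := by
  apply Set.sInter_subset_sInter
  rintro S ⟨hX, hS⟩
  exact ⟨hX, fun r hr => hS r (h hr)⟩

theorem stmt_10 {L : Type*} {ι : Type*} [Nonempty ι] (R : ι → Set (List L × L))
    (j : ι) (hj : genOp (⋂ i, R i) = genOp (R j)) :
    ∀ X : Set L, genOp (R j) X = ⋂ i, genOp (R i) X := by
  intro X
  apply subset_antisymm
  · rw [← hj]
    exact Set.subset_iInter fun i =>
      genOp_mono_rules (Set.iInter_subset _ i) X
  · exact Set.iInter_subset _ j
end

section
/- For any type L and any X Y : Set L, the operator C(X,Y) is a finite consequence operator on L: for all A B : Set L one has A ⊆ C(X,Y)(A); A ⊆ B implies C(X,Y)(A) ⊆ C(X,Y)(B); C(X,Y)(C(X,Y)(A)) = C(X,Y)(A); and C(X,Y)(A) = ⋃ {C(X,Y)(F) | F ⊆ A and F finite}. -/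
open Classical in
/-- The operator `C(X,Y)`: `C(X,Y)(A) = A ∪ X` if `A ∩ Y ≠ ∅`, and `A` otherwise. -/
noncomputable def Cop {L : Type*} (X Y : Set L) (A : Set L) : Set L :=
  if (A ∩ Y).Nonempty then A ∪ X else A

lemma Cop_ext {L : Type*} (X Y A : Set L) : A ⊆ Cop X Y A := by
  unfold Cop; split
  · exact Set.subset_union_left
  · exact subset_rfl

lemma Cop_mono {L : Type*} (X Y : Set L) {A B : Set L} (h : A ⊆ B) :
    Cop X Y A ⊆ Cop X Y B := by
  unfold Cop
  split
  next h1 =>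
    rw [if_pos (h1.mono (Set.inter_subset_inter_left Y h))]
    exact Set.union_subset_union_left X h
  next =>
    split
    · exact h.trans Set.subset_union_left
    · exact h

theorem stmt_11 {L : Type*} (X Y : Set L) :
    (∀ A : Set L, A ⊆ Cop X Y A) ∧
    (∀ A B : Set L, A ⊆ B → Cop X Y A ⊆ Cop X Y B) ∧
    (∀ A : Set L, Cop X Y (Cop X Y A) = Cop X Y A) ∧
    (∀ A : Set L, Cop X Y A = ⋃ F ∈ {F : Set L | F ⊆ A ∧ F.Finite}, Cop X Y F) := by
  refine ⟨Cop_ext X Y, fun A B h => Cop_mono X Y h, ?_, ?_⟩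
  · intro A
    by_cases h : (A ∩ Y).Nonempty
    · have h1 : Cop X Y A = A ∪ X := if_pos h
      have h2 : ((A ∪ X) ∩ Y).Nonempty :=
        h.mono (Set.inter_subset_inter_left Y Set.subset_union_left)
      rw [h1]
      unfold Cop
      rw [if_pos h2, Set.union_assoc, Set.union_self]
    · rw [show Cop X Y A = A from if_neg h]; exact if_neg h
  · intro A
    apply Set.Subset.antisymm
    · intro a ha
      simp only [Set.mem_iUnion, Set.mem_setOf_eq]
      by_cases h : (A ∩ Y).Nonempty
      · obtain ⟨y, hyA, hyY⟩ := h
        have ha' : a ∈ A ∪ X := by rwa [show Cop X Y A = A ∪ X from if_pos ⟨y, hyA, hyY⟩] at ha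
        rcases ha' with haA | haX
        · refine ⟨{y, a}, ⟨?_, (Set.finite_singleton a).insert y⟩, ?_⟩
          · intro z hz; rcases hz with rfl | rfl; exacts [hyA, haA]
          · exact Cop_ext X Y _ (by simp)
        · refine ⟨{y}, ⟨Set.singleton_subset_iff.2 hyA, Set.finite_singleton _⟩, ?_⟩
          have : ({y} ∩ Y : Set L).Nonempty := ⟨y, rfl, hyY⟩
          rw [show Cop X Y {y} = {y} ∪ X from if_pos this]
          exact Or.inr haX
      · have haA : a ∈ A := by rwa [show Cop X Y A = A from if_neg h] at ha
        exact ⟨{a}, ⟨Set.singleton_subset_iff.2 haA, Set.finite_singleton _⟩,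
          Cop_ext X Y _ rfl⟩
    · simp only [Set.iUnion_subset_iff, Set.mem_setOf_eq]
      intro F hF
      exact Cop_mono X Y hF.1
end

section
/- For any type L and any X Y : Set L, the operator C'(X,Y) is a consequence operator on L: for all A B : Set L one has A ⊆ C'(X,Y)(A); A ⊆ B implies C'(X,Y)(A) ⊆ C'(X,Y)(B); and C'(X,Y)(C'(X,Y)(A)) = C'(X,Y)(A). -/
open Classical in
/-- The operator `C'(X,Y)`: `C'(X,Y)(A) = A ∪ X` if `Y ⊆ A`, and `A` otherwise. -/
noncomputable def Cop' {L : Type*} (X Y : Set L) (A : Set L) : Set L :=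
  if Y ⊆ A then A ∪ X else A

theorem stmt_12 {L : Type*} (X Y : Set L) :
    (∀ A : Set L, A ⊆ Cop' X Y A) ∧
    (∀ A B : Set L, A ⊆ B → Cop' X Y A ⊆ Cop' X Y B) ∧
    (∀ A : Set L, Cop' X Y (Cop' X Y A) = Cop' X Y A) := by
  refine ⟨fun A => ?_, fun A B hAB => ?_, fun A => ?_⟩
  · unfold Cop'; split
    · exact Set.subset_union_left
    · exact subset_rfl
  · unfold Cop'
    split
    · rename_i hYA
      rw [if_pos (hYA.trans hAB)]
      exact Set.union_subset_union_left X hAB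
    · split
      · exact hAB.trans Set.subset_union_left
      · exact hAB
  · unfold Cop'
    by_cases hYA : Y ⊆ A
    · rw [if_pos hYA, if_pos (hYA.trans Set.subset_union_left), Set.union_assoc,
        Set.union_self]
    · rw [if_neg hYA, if_neg hYA]
end

section
/- For any type L and any X Y : Set L with Y finite, the operator C'(X,Y) is a finite consequence operator on L; in particular C'(X,Y)(A) = ⋃ {C'(X,Y)(F) | F ⊆ A and F finite} for every A : Set L. -/
lemma Cop'_ext {L : Type*} (X Y A : Set L) : A ⊆ Cop' X Y A := by
  unfold Cop'; split
  · exact Set.subset_union_left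
  · exact subset_rfl

lemma Cop'_mono {L : Type*} (X Y : Set L) {A B : Set L} (h : A ⊆ B) :
    Cop' X Y A ⊆ Cop' X Y B := by
  unfold Cop'
  split_ifs with h1 h2 h2
  · exact Set.union_subset_union_left X h
  · exact absurd (h1.trans h) h2
  · exact h.trans Set.subset_union_left
  · exact h

lemma Cop'_idem {L : Type*} (X Y A : Set L) : Cop' X Y (Cop' X Y A) = Cop' X Y A := by
  unfold Cop'
  by_cases hYA : Y ⊆ A
  · rw [if_pos hYA, if_pos (hYA.trans Set.subset_union_left), Set.union_assoc, Set.union_self]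
  · rw [if_neg hYA, if_neg hYA]

theorem stmt_13 {L : Type*} (X Y : Set L) (hY : Y.Finite) :
    IsFinConseq (Cop' X Y) ∧
    ∀ A : Set L, Cop' X Y A = ⋃ F ∈ {F : Set L | F ⊆ A ∧ F.Finite}, Cop' X Y F := by
  have hfin : ∀ A : Set L, Cop' X Y A = ⋃ F ∈ {F : Set L | F ⊆ A ∧ F.Finite}, Cop' X Y F := by
    intro A
    apply Set.Subset.antisymm
    · intro a ha
      simp only [Set.mem_iUnion, Set.mem_setOf_eq]
      by_cases hYA : Y ⊆ A
      · rw [Cop', if_pos hYA] at ha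
        rcases ha with ha | ha
        · exact ⟨Y ∪ {a}, ⟨Set.union_subset hYA (by simpa using ha),
            hY.union (Set.finite_singleton a)⟩,
            by rw [Cop', if_pos Set.subset_union_left]; left; right; simp⟩
        · exact ⟨Y, ⟨hYA, hY⟩, by rw [Cop', if_pos subset_rfl]; right; exact ha⟩
      · rw [Cop', if_neg hYA] at ha
        exact ⟨{a}, ⟨by simpa using ha, Set.finite_singleton a⟩,
          Cop'_ext X Y {a} (by simp)⟩
    · intro a ha
      simp only [Set.mem_iUnion, Set.mem_setOf_eq] at ha
      obtain ⟨F, ⟨hFA, _⟩, haF⟩ := ha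
      exact Cop'_mono X Y hFA haF
  exact ⟨⟨⟨Cop'_ext X Y, fun A B h => Cop'_mono X Y h, Cop'_idem X Y⟩, hfin⟩, hfin⟩
end

section
/- Let L be a type and X Y A : Set L with Y infinite, Y ⊆ A, and ¬(X ⊆ A). Then C'(X,Y)(A) ≠ ⋃ {C'(X,Y)(F) | F ⊆ A and F finite}; in particular C'(X,Y) is a consequence operator that is not a finite consequence operator. -/
theorem stmt_14 {L : Type*} (X Y A : Set L) (hY : Y.Infinite)
    (hYA : Y ⊆ A) (hXA : ¬ X ⊆ A) :
    Cop' X Y A ≠ ⋃ F ∈ {F : Set L | F ⊆ A ∧ F.Finite}, Cop' X Y F ∧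
    IsConseq (Cop' X Y) ∧
    ¬ IsFinConseq (Cop' X Y) := by
  have hunion : (⋃ F ∈ {F : Set L | F ⊆ A ∧ F.Finite}, Cop' X Y F) = A := by
    apply Set.Subset.antisymm
    · intro a ha
      simp only [Set.mem_iUnion] at ha
      obtain ⟨F, ⟨hFA, hFfin⟩, haF⟩ := ha
      have hYF : ¬ Y ⊆ F := fun h => hY (hFfin.subset h)
      rw [Cop', if_neg hYF] at haF
      exact hFA haF
    · intro a ha
      simp only [Set.mem_iUnion]
      refine ⟨{a}, ⟨Set.singleton_subset_iff.mpr ha, Set.finite_singleton a⟩, ?_⟩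
      have hYs : ¬ Y ⊆ ({a} : Set L) := fun h => hY ((Set.finite_singleton a).subset h)
      rw [Cop', if_neg hYs]
      exact rfl
  have hne : Cop' X Y A ≠ ⋃ F ∈ {F : Set L | F ⊆ A ∧ F.Finite}, Cop' X Y F := by
    rw [hunion, Cop', if_pos hYA]
    intro h
    exact hXA (fun x hx => h ▸ Set.mem_union_right A hx)
  have hext : ∀ B : Set L, B ⊆ Cop' X Y B := by
    intro B
    rw [Cop']
    split
    · exact Set.subset_union_left
    · exact le_refl _
  have hconseq : IsConseq (Cop' X Y) := by
    refine ⟨hext, ?_, ?_⟩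
    · intro B C hBC
      simp only [Cop']
      split
      · rw [if_pos ((‹Y ⊆ B›).trans hBC)]
        exact Set.union_subset_union_left X hBC
      · split
        · exact hBC.trans Set.subset_union_left
        · exact hBC
    · intro B
      by_cases h : Y ⊆ B
      · simp only [Cop', if_pos h, if_pos (h.trans Set.subset_union_left),
          Set.union_assoc, Set.union_self]
        exact ite_self _
      · simp only [Cop', if_neg h]
        exact if_neg (by rw [if_neg h]; exact h)
  exact ⟨hne, hconseq, fun hfin => hne ((hfin.2 A))⟩
end

section
/- For a countably infinite (denumerable) type L, the set of all finite consequence operators on L has the cardinality of the continuum: #{C : Set L → Set L | C is a finite consequence operator} = 2^ℵ₀. -/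
lemma unionA_finconseq {L : Type*} (A : Set L) : IsFinConseq (fun X => X ∪ A) := by
  refine ⟨⟨fun X => Set.subset_union_left, fun X Y h => Set.union_subset_union_left A h,
    fun X => by simp [Set.union_assoc]⟩, fun X => ?_⟩
  ext x
  simp only [Set.mem_iUnion, Set.mem_setOf_eq, Set.mem_union]
  constructor
  · rintro (hx | hx)
    · exact ⟨{x}, ⟨Set.singleton_subset_iff.mpr hx, Set.finite_singleton x⟩, Or.inl rfl⟩
    · exact ⟨∅, ⟨Set.empty_subset X, Set.finite_empty⟩, Or.inr hx⟩
  · rintro ⟨F, ⟨hF, -⟩, hx | hx⟩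
    · exact Or.inl (hF hx)
    · exact Or.inr hx

theorem stmt_16 (L : Type) [Countable L] [Infinite L] :
    Cardinal.mk {C : Set L → Set L // IsFinConseq C} = 2 ^ Cardinal.aleph0 := by
  have hL : Cardinal.mk L = Cardinal.aleph0 := Cardinal.mk_eq_aleph0 L
  apply le_antisymm
  · -- upper bound: restriction to finite sets is injective
    have hinj : Function.Injective
        (fun (C : {C : Set L → Set L // IsFinConseq C}) =>
          (fun F : {F : Set L // F.Finite} => C.1 F.1)) := by
      rintro ⟨C, hC⟩ ⟨D, hD⟩ h
      have h' : ∀ F : Set L, F.Finite → C F = D F := by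
        intro F hF
        exact congrFun h ⟨F, hF⟩
      ext X x
      show x ∈ C X ↔ x ∈ D X
      rw [hC.2 X, hD.2 X]
      simp only [Set.mem_iUnion, Set.mem_setOf_eq]
      constructor
      · rintro ⟨F, ⟨h1, h2⟩, hx⟩
        exact ⟨F, ⟨h1, h2⟩, (h' F h2) ▸ hx⟩
      · rintro ⟨F, ⟨h1, h2⟩, hx⟩
        exact ⟨F, ⟨h1, h2⟩, (h' F h2) ▸ hx⟩
    calc Cardinal.mk {C : Set L → Set L // IsFinConseq C}
        ≤ Cardinal.mk ({F : Set L // F.Finite} → Set L) := Cardinal.mk_le_of_injective hinj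
      _ = Cardinal.mk (Set L) ^ Cardinal.mk {F : Set L // F.Finite} := by
          rw [Cardinal.power_def]
      _ = (2 ^ Cardinal.aleph0) ^ Cardinal.mk {F : Set L // F.Finite} := by
          rw [Cardinal.mk_set, hL]
      _ ≤ (2 ^ Cardinal.aleph0) ^ Cardinal.aleph0 := by
          haveI : Countable {F : Set L // F.Finite} :=
            (Set.Countable.setOf_finite (α := L)).to_subtype
          exact Cardinal.power_le_power_left
            (Cardinal.power_ne_zero _ two_ne_zero) Cardinal.mk_le_aleph0
      _ = 2 ^ Cardinal.aleph0 := by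
          rw [← Cardinal.power_mul, Cardinal.aleph0_mul_aleph0]
  · -- lower bound: A ↦ (X ↦ X ∪ A)
    have hinj : Function.Injective
        (fun A : Set L => (⟨fun X => X ∪ A, unionA_finconseq A⟩ :
          {C : Set L → Set L // IsFinConseq C})) := by
      intro A B h
      have := congrFun (congrArg Subtype.val h) ∅
      simpa using this
    calc (2 : Cardinal) ^ Cardinal.aleph0 = Cardinal.mk (Set L) := by rw [Cardinal.mk_set, hL]
      _ ≤ _ := Cardinal.mk_le_of_injective hinj
end

section
/- Let L be a countably infinite type and C a finite consequence operator on L. Then there exist infinitely many pairwise distinct general logic-systems generating C: there is an injective sequence n ↦ R_n of sets R_n ⊆ (List L) × L such that C_{R_n} = C for every n : ℕ. -/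
theorem stmt_17 (L : Type*) [Countable L] [Infinite L]
    (C : Set L → Set L) (hC : IsFinConseq C) :
    ∃ R : ℕ → Set (List L × L), Function.Injective R ∧ ∀ n, genOp (R n) = C := by
  obtain ⟨⟨hext, hmono, hidem⟩, hfin⟩ := hC
  obtain ⟨a⟩ : Nonempty L := inferInstance
  refine ⟨fun n => {r : List L × L | r.2 ∈ C {x | x ∈ r.1}} \
      {(List.replicate (n+2) a, a)}, ?_, ?_⟩
  · intro n m h
    by_contra hnm
    have h1 : (List.replicate (m+2) a, a) ∈
        ({r : List L × L | r.2 ∈ C {x | x ∈ r.1}} \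
          {(List.replicate (n+2) a, a)}) := by
      constructor
      · show a ∈ C {x | x ∈ List.replicate (m+2) a}
        have he : {x | x ∈ List.replicate (m+2) a} = {a} := by
          ext x; simp [List.mem_replicate]
        rw [he]; exact hext {a} rfl
      · simp only [Set.mem_singleton_iff]
        intro heq
        have := congrArg (fun p : List L × L => p.1.length) heq
        simp at this
        exact hnm (by omega)
    simp only at h
    rw [h] at h1
    exact h1.2 rfl
  · intro n
    funext X
    apply Set.Subset.antisymm
    · apply Set.sInter_subset_of_mem
      refine ⟨hext X, ?_⟩
      rintro ⟨l, c⟩ hr hprem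
      have hsub : {x | x ∈ l} ⊆ C X := hprem
      have := hmono _ _ hsub
      rw [hidem] at this
      exact this hr.1
    · intro c hc S hS
      obtain ⟨hXS, hcl⟩ := hS
      rw [hfin X] at hc
      simp only [Set.mem_iUnion, Set.mem_setOf_eq] at hc
      obtain ⟨F, ⟨hFX, hFfin⟩, hcF⟩ := hc
      set l := hFfin.toFinset.toList with hldef
      have hl : {x | x ∈ l} = F := by
        ext x; simp [hldef]
      refine hcl (l, c) ⟨?_, ?_⟩ ?_
      · show c ∈ C {x | x ∈ l}
        rw [hl]; exact hcF
      · simp only [Set.mem_singleton_iff]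
        intro heq
        have hfst : l = List.replicate (n+2) a := congrArg Prod.fst heq
        have hnd : l.Nodup := hFfin.toFinset.nodup_toList
        rw [hfst] at hnd
        rw [List.nodup_replicate] at hnd
        omega
      · intro x hx
        exact hXS (hFX (hl ▸ hx))
end
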